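/- arXiv:2602.14732 — 2 statements merged into one kernel-verified Lean document; each statement's English description precedes it below -/
import Mathlib

section
/- Let {E_i}_{i∈[n]} be an orthogonal resolution of identity on ℂ^d (∑_i E_i = I and E_i E_j = δ_{ij} E_i), and let Λ(X) := ∑_i E_i X E_i be the associated pinching channel. Let P be positive definite and let C be positive definite with Λ(C) = C. Define M := Λ(P)^{-1} # C. Then Λ(M P M) = C, and M P M is the unique maximizer of Q ↦ F(P,Q) over the set {Q PSD : Λ(Q) = C}. -/
open Matrix Kronecker
open scoped ComplexOrder

noncomputable section

open Classical in
/-- The positive semidefinite square root of a PSD matrix (junk value `0` otherwise). -/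
noncomputable def msqrt {n : Type*} [Fintype n] [DecidableEq n] (A : Matrix n n ℂ) :
    Matrix n n ℂ :=
  if h : A.PosSemidef then
    (h.1.eigenvectorUnitary : Matrix n n ℂ) *
      diagonal (((↑) : ℝ → ℂ) ∘ Real.sqrt ∘ h.1.eigenvalues) *
      (star h.1.eigenvectorUnitary : Matrix n n ℂ)
  else 0

/-- The (square-root) fidelity `F(P,Q) = Tr[√(√Q P √Q)]`. -/
noncomputable def fidelity {n : Type*} [Fintype n] [DecidableEq n]
    (P Q : Matrix n n ℂ) : ℝ :=
  ((msqrt (msqrt Q * P * msqrt Q)).trace).re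

/-- The matrix geometric mean `A # B = A^{1/2} √(A^{-1/2} B A^{-1/2}) A^{1/2}`. -/
noncomputable def geomMean {n : Type*} [Fintype n] [DecidableEq n]
    (A B : Matrix n n ℂ) : Matrix n n ℂ :=
  msqrt A * msqrt ((msqrt A)⁻¹ * B * (msqrt A)⁻¹) * msqrt A

/-
`F(P,Q)` is symmetric in `P` and `Q`: `√Q P √Q` and `√P Q √P` are the products `XY` and `YX`
for `X = √Q √P`, `Y = √P √Q`, so they have the same characteristic polynomial. Hence
`F(P,Q) = Tr R` with `R = √(S Q S)`, `S = √P`. For `Z > 0`,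
`Tr Z + Tr (R Z⁻¹ R) - 2 Tr R = Tr ((Z - R) Z⁻¹ (Z - R)) ≥ 0`, with equality iff `R = Z`;
taking `Z = S M S` gives `2 F(P,Q) ≤ Tr (P M) + Tr (Q M⁻¹)`, with equality iff `Q = M P M`.
For `M = Λ(P)⁻¹ # C` we have `M Λ(P) M = C` and `M` commutes with every `E i`. So
`Λ(M P M) = C`, and every feasible `Q` has `Tr (Q M⁻¹) = Tr (C M⁻¹) = Tr (P M) = F(P, M P M)`.
-/

namespace Matrix

open scoped MatrixOrder

variable {d : Type*} [Fintype d] [DecidableEq d] {A B X : Matrix d d ℂ}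

lemma msqrt_eq_cfcSqrt (hA : A.PosSemidef) : msqrt A = CFC.sqrt A := by
  rw [CFC.sqrt_eq_real_sqrt A hA.nonneg, cfcₙ_eq_cfc (hf0 := by simp), hA.1.cfc_eq, msqrt,
    dif_pos hA]
  rfl

lemma posSemidef_msqrt (hA : A.PosSemidef) : (msqrt A).PosSemidef := by
  rw [msqrt_eq_cfcSqrt hA]
  exact (CFC.sqrt_nonneg A).posSemidef

lemma isHermitian_msqrt (hA : A.PosSemidef) : (msqrt A).IsHermitian :=
  (posSemidef_msqrt hA).1

lemma msqrt_mul_msqrt (hA : A.PosSemidef) : msqrt A * msqrt A = A := by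
  rw [msqrt_eq_cfcSqrt hA]
  exact CFC.sqrt_mul_sqrt_self A hA.nonneg

lemma msqrt_mul_self (hB : B.PosSemidef) : msqrt (B * B) = B := by
  rw [msqrt_eq_cfcSqrt (by simpa [hB.1.eq] using posSemidef_conjTranspose_mul_self B)]
  exact CFC.sqrt_mul_self B hB.nonneg

lemma posDef_msqrt (hA : A.PosDef) : (msqrt A).PosDef := by
  refine (posSemidef_msqrt hA.posSemidef).posDef_iff_isUnit.mpr ?_
  exact isUnit_of_mul_isUnit_left ((msqrt_mul_msqrt hA.posSemidef).symm ▸ hA.isUnit)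

lemma Commute.msqrt_right (h : Commute X A) : Commute X (msqrt A) := by
  by_cases hA : A.PosSemidef
  · rw [msqrt_eq_cfcSqrt hA, CFC.sqrt_eq_cfc]
    exact (h.symm.cfc_nnreal _).symm
  · simp [msqrt, hA]

lemma Commute.nonsing_inv_right (h : Commute X A) : Commute X A⁻¹ := by
  by_cases hA : IsUnit A
  · rw [← hA.unit_spec, ← coe_units_inv]
    exact (hA.unit_spec ▸ h).units_inv_right
  · simp [nonsing_inv_eq_ringInverse, Ring.inverse_non_unit _ hA]

omit [DecidableEq d] in
lemma PosSemidef.mul_mul_of_isHermitian (hA : A.PosSemidef) (hB : B.IsHermitian) :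
    (B * A * B).PosSemidef := by
  simpa [hB.eq] using hA.conjTranspose_mul_mul_same B

lemma PosDef.mul_mul_of_posDef (hA : A.PosDef) (hB : B.PosDef) : (B * A * B).PosDef := by
  have := hB.isUnit.posDef_star_left_conjugate_iff.mpr hA
  rwa [star_eq_conjTranspose, hB.1.eq] at this

lemma Commute.geomMean_right (hA : Commute X A) (hB : Commute X B) :
    Commute X (geomMean A B) := by
  have hS : Commute X (msqrt A) := hA.msqrt_right
  exact (hS.mul_right (((hS.nonsing_inv_right.mul_right hB).mul_right
    hS.nonsing_inv_right).msqrt_right)).mul_right hS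

lemma posDef_geomMean (hA : A.PosDef) (hB : B.PosDef) : (geomMean A B).PosDef := by
  have hS := posDef_msqrt hA
  exact (posDef_msqrt (hB.mul_mul_of_posDef hS.inv)).mul_mul_of_posDef hS

lemma geomMean_mul_inv_mul_geomMean (hA : A.PosDef) (hB : B.PosSemidef) :
    geomMean A B * A⁻¹ * geomMean A B = B := by
  have hSS := msqrt_mul_msqrt hA.posSemidef
  have hS : IsUnit (msqrt A).det := (isUnit_iff_isUnit_det _).mp (posDef_msqrt hA).isUnit
  have hX := hB.mul_mul_of_isHermitian (isHermitian_msqrt hA.posSemidef).inv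
  unfold geomMean
  generalize msqrt A = S at hSS hS hX ⊢
  subst hSS
  calc S * msqrt (S⁻¹ * B * S⁻¹) * S * (S * S)⁻¹ * (S * msqrt (S⁻¹ * B * S⁻¹) * S)
      = S * (msqrt (S⁻¹ * B * S⁻¹) * msqrt (S⁻¹ * B * S⁻¹)) * S := by
        simp only [Matrix.mul_inv_rev, mul_assoc, nonsing_inv_mul_cancel_left (h := hS),
          mul_nonsing_inv_cancel_left (h := hS)]
    _ = B := by
        rw [msqrt_mul_msqrt hX, ← mul_assoc, ← mul_assoc, mul_nonsing_inv _ hS, one_mul,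
          mul_assoc, nonsing_inv_mul _ hS, mul_one]

lemma trace_msqrt (hA : A.PosSemidef) :
    (msqrt A).trace = (A.charpoly.roots.map fun z : ℂ => ((√z.re : ℝ) : ℂ)).sum := by
  rw [msqrt, dif_pos hA, trace_mul_cycle, Unitary.coe_star_mul_self, one_mul, trace_diagonal,
    hA.1.roots_charpoly_eq_eigenvalues, Multiset.map_map]
  rfl

lemma trace_msqrt_mul_comm (hAB : (A * B).PosSemidef) (hBA : (B * A).PosSemidef) :
    (msqrt (A * B)).trace = (msqrt (B * A)).trace := by
  rw [trace_msqrt hAB, trace_msqrt hBA, charpoly_mul_comm]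

lemma mul_msqrt_mul_msqrt_mul (hA : A.PosSemidef) (B : Matrix d d ℂ) :
    (B * msqrt A) * (msqrt A * B) = B * A * B := by
  rw [mul_assoc, ← mul_assoc (msqrt A), msqrt_mul_msqrt hA, ← mul_assoc]

variable {P Q M : Matrix d d ℂ}

lemma msqrt_mul_mul_msqrt_mul_self (hP : P.PosSemidef) (M : Matrix d d ℂ) :
    (msqrt P * M * msqrt P) * (msqrt P * M * msqrt P) = msqrt P * (M * P * M) * msqrt P := by
  rw [← mul_msqrt_mul_msqrt_mul hP M]
  simp only [mul_assoc]

lemma fidelity_comm (hP : P.PosSemidef) (hQ : Q.PosSemidef) : fidelity P Q = fidelity Q P := by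
  have hPQ := hP.mul_mul_of_isHermitian (isHermitian_msqrt hQ)
  have hQP := hQ.mul_mul_of_isHermitian (isHermitian_msqrt hP)
  rw [← mul_msqrt_mul_msqrt_mul hP] at hPQ
  rw [← mul_msqrt_mul_msqrt_mul hQ] at hQP
  rw [fidelity, fidelity, ← mul_msqrt_mul_msqrt_mul hP, ← mul_msqrt_mul_msqrt_mul hQ,
    trace_msqrt_mul_comm hPQ hQP]

lemma fidelity_mul_mul_eq_trace (hP : P.PosSemidef) (hM : M.PosSemidef) :
    fidelity P (M * P * M) = (P * M).trace.re := by
  have hSMS := hM.mul_mul_of_isHermitian (isHermitian_msqrt hP)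
  rw [fidelity_comm hP (hP.mul_mul_of_isHermitian hM.1), fidelity,
    ← msqrt_mul_mul_msqrt_mul_self hP, msqrt_mul_self hSMS, trace_mul_cycle, msqrt_mul_msqrt hP]

variable {Z R : Matrix d d ℂ}

lemma trace_sub_mul_inv_mul_sub (hZ : IsUnit Z) :
    ((Z - R) * Z⁻¹ * (Z - R)).trace = Z.trace + (R * Z⁻¹ * R).trace - 2 * R.trace := by
  have hZ' := (isUnit_iff_isUnit_det Z).mp hZ
  simp only [sub_mul, mul_sub, mul_nonsing_inv _ hZ', nonsing_inv_mul_cancel_right (h := hZ'),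
    one_mul, trace_sub]
  ring

lemma sub_mul_inv_mul_sub_eq_conjTranspose_mul_self (hZ : Z.PosDef) (hR : R.IsHermitian) :
    (Z - R) * Z⁻¹ * (Z - R) = ((msqrt Z)⁻¹ * (Z - R))ᴴ * ((msqrt Z)⁻¹ * (Z - R)) := by
  have hZinv : Z⁻¹ = (msqrt Z)⁻¹ * (msqrt Z)⁻¹ := by
    rw [← Matrix.mul_inv_rev, msqrt_mul_msqrt hZ.posSemidef]
  rw [conjTranspose_mul, conjTranspose_nonsing_inv, (isHermitian_msqrt hZ.posSemidef).eq,
    conjTranspose_sub, hZ.1.eq, hR.eq, hZinv]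
  simp only [mul_assoc]

lemma two_mul_trace_re_le_trace_re_add (hZ : Z.PosDef) (hR : R.IsHermitian) :
    2 * R.trace.re ≤ Z.trace.re + (R * Z⁻¹ * R).trace.re := by
  have h := (posSemidef_conjTranspose_mul_self ((msqrt Z)⁻¹ * (Z - R))).trace_nonneg
  rw [← sub_mul_inv_mul_sub_eq_conjTranspose_mul_self hZ hR,
    trace_sub_mul_inv_mul_sub hZ.isUnit] at h
  have := (Complex.nonneg_iff.mp h).1
  simp only [Complex.sub_re, Complex.add_re, Complex.mul_re, Complex.re_ofNat, Complex.im_ofNat,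
    zero_mul, sub_zero, sub_nonneg] at this
  linarith

lemma eq_of_trace_re_add_eq_two_mul (hZ : Z.PosDef) (hR : R.IsHermitian)
    (h : Z.trace.re + (R * Z⁻¹ * R).trace.re = 2 * R.trace.re) : R = Z := by
  set D := (msqrt Z)⁻¹ * (Z - R)
  have h0 := (posSemidef_conjTranspose_mul_self D).trace_nonneg
  have hD : (Dᴴ * D).trace = 0 := by
    rw [← sub_mul_inv_mul_sub_eq_conjTranspose_mul_self hZ hR,
      trace_sub_mul_inv_mul_sub hZ.isUnit] at h0 ⊢
    refine Complex.ext ?_ (Complex.nonneg_iff.mp h0).2.symm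
    simp only [Complex.sub_re, Complex.add_re, Complex.mul_re, Complex.re_ofNat,
      Complex.im_ofNat, zero_mul, sub_zero, Complex.zero_re]
    linarith
  have hS : IsUnit (msqrt Z).det := (isUnit_iff_isUnit_det _).mp (posDef_msqrt hZ).isUnit
  have := congrArg (msqrt Z * ·) (trace_conjTranspose_mul_self_eq_zero_iff.mp hD)
  simp only [D, mul_nonsing_inv_cancel_left (h := hS), mul_zero, sub_eq_zero] at this
  exact this.symm

lemma trace_msqrt_conj_mul_inv_mul {S : Matrix d d ℂ} (hS : IsUnit S)
    (hQ : (S * Q * S).PosSemidef) :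
    (msqrt (S * Q * S) * (S * M * S)⁻¹ * msqrt (S * Q * S)).trace = (Q * M⁻¹).trace := by
  rw [trace_mul_cycle, msqrt_mul_msqrt hQ, Matrix.mul_inv_rev, Matrix.mul_inv_rev]
  have hS' := (isUnit_iff_isUnit_det S).mp hS
  calc (S * Q * S * (S⁻¹ * (M⁻¹ * S⁻¹))).trace = (S * (Q * M⁻¹) * S⁻¹).trace := by
        rw [mul_assoc (S * Q), mul_nonsing_inv_cancel_left (h := hS')]; noncomm_ring
    _ = (Q * M⁻¹).trace := trace_conj hS _

lemma two_mul_fidelity_le (hP : P.PosDef) (hQ : Q.PosSemidef) (hM : M.PosDef) :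
    2 * fidelity P Q ≤ (P * M).trace.re + (Q * M⁻¹).trace.re := by
  have hS : (msqrt P).PosDef := posDef_msqrt hP
  have hSQS := hQ.mul_mul_of_isHermitian hS.1
  have := two_mul_trace_re_le_trace_re_add (hM.mul_mul_of_posDef hS) (isHermitian_msqrt hSQS)
  rwa [trace_msqrt_conj_mul_inv_mul hS.isUnit hSQS, trace_mul_cycle,
    msqrt_mul_msqrt hP.posSemidef, ← fidelity, ← fidelity_comm hP.posSemidef hQ] at this

lemma eq_mul_mul_of_two_mul_fidelity_eq (hP : P.PosDef) (hQ : Q.PosSemidef) (hM : M.PosDef)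
    (h : 2 * fidelity P Q = (P * M).trace.re + (Q * M⁻¹).trace.re) : Q = M * P * M := by
  have hS : (msqrt P).PosDef := posDef_msqrt hP
  have hSQS := hQ.mul_mul_of_isHermitian hS.1
  have hRZ := eq_of_trace_re_add_eq_two_mul (hM.mul_mul_of_posDef hS) (isHermitian_msqrt hSQS) (by
    rw [trace_msqrt_conj_mul_inv_mul hS.isUnit hSQS, trace_mul_cycle,
      msqrt_mul_msqrt hP.posSemidef, ← fidelity, ← fidelity_comm hP.posSemidef hQ, h])
  have : msqrt P * Q * msqrt P = msqrt P * (M * P * M) * msqrt P := by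
    rw [← msqrt_mul_msqrt hSQS, hRZ, msqrt_mul_mul_msqrt_mul_self hP.posSemidef]
  exact hS.isUnit.mul_left_cancel (hS.isUnit.mul_right_cancel this)

end Matrix

section Pinching

variable {ι R : Type*} [Fintype ι]

def pinching [NonUnitalNonAssocSemiring R] (E : ι → R) (X : R) : R := ∑ i, E i * X * E i

variable [Ring R] {E : ι → R}

lemma commute_pinching [DecidableEq ι] (horth : ∀ i j, E i * E j = if i = j then E i else 0)
    (X : R) (j : ι) : Commute (E j) (pinching E X) := by
  have hleft : E j * pinching E X = E j * X * E j := by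
    simp only [pinching, Finset.mul_sum, ← mul_assoc, horth, ite_mul, zero_mul,
      Finset.sum_ite_eq, Finset.mem_univ, if_true]
  have hright : pinching E X * E j = E j * X * E j := by
    simp only [pinching, Finset.sum_mul, mul_assoc, horth, mul_ite, mul_zero,
      Finset.sum_ite_eq', Finset.mem_univ, if_true]
  exact hleft.trans hright.symm

lemma pinching_mul_mul {M N : R} (hM : ∀ i, Commute (E i) M) (hN : ∀ i, Commute (E i) N)
    (X : R) : pinching E (M * X * N) = M * pinching E X * N := by
  simp only [pinching, Finset.mul_sum, Finset.sum_mul]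
  refine Finset.sum_congr rfl fun i _ => ?_
  rw [show E i * (M * X * N) * E i = E i * M * X * (N * E i) by noncomm_ring, (hM i).eq,
    ← (hN i).eq]
  noncomm_ring

end Pinching

namespace Matrix

variable {ι d : Type*} [Fintype ι] [Fintype d] [DecidableEq d] {E : ι → Matrix d d ℂ}

lemma trace_pinching_mul (hidem : ∀ i, E i * E i = E i) (hsum : ∑ i, E i = 1)
    {X : Matrix d d ℂ} (hX : ∀ i, Commute (E i) X) (A : Matrix d d ℂ) :
    (pinching E A * X).trace = (A * X).trace := by
  calc (pinching E A * X).trace = ∑ i, (A * X * (E i * E i)).trace := by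
        simp only [pinching, Finset.sum_mul, trace_sum]
        refine Finset.sum_congr rfl fun i _ => ?_
        rw [show E i * A * E i * X = E i * (A * (E i * X)) by noncomm_ring, trace_mul_comm,
          (hX i).eq]
        simp only [mul_assoc]
    _ = (A * X).trace := by simp only [hidem, ← trace_sum, ← Finset.mul_sum, hsum, mul_one]

lemma posDef_pinching (hherm : ∀ i, (E i).IsHermitian) (hsum : ∑ i, E i = 1)
    {P : Matrix d d ℂ} (hP : P.PosDef) : (pinching E P).PosDef := by
  have hterm (i) : (E i * P * E i).PosSemidef := hP.posSemidef.mul_mul_of_isHermitian (hherm i)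
  refine .of_dotProduct_mulVec_pos (posSemidef_sum _ fun i _ => hterm i).1 fun x hx => ?_
  obtain ⟨i, hi⟩ : ∃ i, E i *ᵥ x ≠ 0 := by
    by_contra! h
    have := congrArg (· *ᵥ x) hsum
    simp only [sum_mulVec, h, Finset.sum_const_zero, one_mulVec] at this
    exact hx this.symm
  rw [pinching, sum_mulVec, dotProduct_sum]
  refine Finset.sum_pos' (fun j _ => (hterm j).dotProduct_mulVec_nonneg x)
    ⟨i, Finset.mem_univ i, ?_⟩
  have := hP.dotProduct_mulVec_pos hi
  rwa [star_mulVec, ← dotProduct_mulVec, mulVec_mulVec, mulVec_mulVec, (hherm i).eq] at this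

end Matrix

open Matrix in
/-- Let `{E i}` be an orthogonal resolution of identity and
`Λ X = ∑ i, E i * X * E i` the associated pinching channel. For `P` positive definite
and `C` positive definite with `Λ C = C`, letting `M = (Λ P)⁻¹ # C`, we have
`Λ (M P M) = C` and `M P M` is the unique maximizer of `Q ↦ F(P,Q)` over
`{Q PSD : Λ Q = C}`. -/
theorem pinching_projection
    {d : Type*} [Fintype d] [DecidableEq d] {n : ℕ}
    (E : Fin n → Matrix d d ℂ)
    (hherm : ∀ i, (E i).IsHermitian)
    (horth : ∀ i j, E i * E j = if i = j then E i else 0)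
    (hsum : ∑ i, E i = (1 : Matrix d d ℂ))
    (P : Matrix d d ℂ) (hP : P.PosDef)
    (C : Matrix d d ℂ) (hC : C.PosDef)
    (hCfix : ∑ i, E i * C * E i = C)
    (M : Matrix d d ℂ) (hM : M = geomMean (∑ i, E i * P * E i)⁻¹ C) :
    (∑ i, E i * (M * P * M) * E i) = C ∧ (M * P * M).PosSemidef ∧
    ∀ Q : Matrix d d ℂ, Q.PosSemidef → (∑ i, E i * Q * E i) = C →
      fidelity P Q ≤ fidelity P (M * P * M) ∧
      (fidelity P Q = fidelity P (M * P * M) → Q = M * P * M) := by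
  change pinching E (M * P * M) = C ∧ _ ∧ ∀ Q : Matrix d d ℂ, _ → pinching E Q = C → _
  change pinching E C = C at hCfix
  change M = geomMean (pinching E P)⁻¹ C at hM
  have hΛP := posDef_pinching hherm hsum hP
  have hMpd : M.PosDef := hM ▸ posDef_geomMean hΛP.inv hC
  have hRiccati : M * pinching E P * M = C := by
    simpa [hM, nonsing_inv_nonsing_inv _ ((isUnit_iff_isUnit_det _).mp hΛP.isUnit)] using
      geomMean_mul_inv_mul_geomMean hΛP.inv hC.posSemidef
  have hEM (i) : Commute (E i) M := by
    rw [hM]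
    exact (commute_pinching horth P i).nonsing_inv_right.geomMean_right
      (hCfix ▸ commute_pinching horth C i)
  have hF := fidelity_mul_mul_eq_trace hP.posSemidef hMpd.posSemidef
  refine ⟨by rw [pinching_mul_mul hEM hEM, hRiccati], hP.posSemidef.mul_mul_of_isHermitian hMpd.1,
    fun Q hQ hQC => ?_⟩
  have hidem (i) : E i * E i = E i := by simpa using horth i i
  have htrace : (Q * M⁻¹).trace = (P * M).trace := by
    rw [← trace_pinching_mul hidem hsum (fun i => (hEM i).nonsing_inv_right), hQC, ← hRiccati,
      mul_nonsing_inv_cancel_right (h := (isUnit_iff_isUnit_det _).mp hMpd.isUnit),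
      trace_mul_comm, trace_pinching_mul hidem hsum hEM]
  have hbound := two_mul_fidelity_le hP hQ hMpd
  rw [htrace, ← hF] at hbound
  refine ⟨by linarith, fun h => eq_mul_mul_of_two_mul_fidelity_eq hP hQ hMpd ?_⟩
  rw [htrace, ← hF, h]
  ring
end
end

section
/- Let Λ be a quantum channel, C positive definite, and P a positive semidefinite matrix, and let Q₀ and Q₁ both be maximizers of Q ↦ F(P,Q) over the feasible set Λ^{-1}[C] := {Q PSD : Λ(Q) = C}. Then the compressions of Q₀ and Q₁ to the support of P agree: x† Q₀ y = x† Q₁ y for all vectors x, y in the range of P. In particular, if P is positive definite, the maximizer of Q ↦ F(P,Q) over Λ^{-1}[C] is unique. -/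
open Matrix Kronecker
open scoped ComplexOrder

noncomputable section

/-!
`S ↦ Tr √S` is strictly concave on positive semidefinite matrices. Write `S = a S₀ + b S₁` and
conjugate by a unitary `U` diagonalising `S`: the diagonal entries `xᵢ, yᵢ` of `U* S₀ U, U* S₁ U`
combine to the eigenvalues `a xᵢ + b yᵢ` of `S`, while `Tr √T ≤ ∑ᵢ √Tᵢᵢ` with equality only for
diagonal `T` (as `Tᵢᵢ = ∑ⱼ |(√T)ᵢⱼ|²`). Strict concavity of `√` on the diagonal finishes the job.

Since `F(P, Q) = Tr √(√P Q √P)` (for `A = √P √Q`, `√Q P √Q = A*A` and `√P Q √P = AA*` have the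
same spectrum) and the feasible set is convex, the midpoint of two maximizers would have strictly
larger fidelity unless `√P Q₀ √P = √P Q₁ √P`. Hence `P Q₀ P = P Q₁ P`, and `P` cancels when it is
invertible.
-/

open scoped MatrixOrder

namespace Matrix

variable {n 𝕜 : Type*} [RCLike 𝕜]

lemma IsHermitian.eq_of_isDiag_of_re_diag_eq {A B : Matrix n n 𝕜} (hA : A.IsHermitian)
    (hB : B.IsHermitian) (hA' : A.IsDiag) (hB' : B.IsDiag)
    (h : ∀ i, RCLike.re (A i i) = RCLike.re (B i i)) : A = B := by
  ext i j
  by_cases hij : i = j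
  · rw [hij, ← hA.coe_re_apply_self, ← hB.coe_re_apply_self, h]
  · rw [hA' hij, hB' hij]

variable [Fintype n]

lemma PosSemidef.star_mul_mul_same {S : Matrix n n 𝕜} (hS : S.PosSemidef) (U : Matrix n n 𝕜) :
    (star U * S * U).PosSemidef :=
  hS.conjTranspose_mul_mul_same U

lemma IsHermitian.re_mul_self_apply_self {R : Matrix n n 𝕜} (hR : R.IsHermitian) (i : n) :
    RCLike.re ((R * R) i i) = ∑ j, ‖R i j‖ ^ 2 := by
  rw [mul_apply, map_sum]
  refine Finset.sum_congr rfl fun j _ => ?_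
  rw [← hR.apply j i, RCLike.star_def, RCLike.mul_conj, ← RCLike.ofReal_pow, RCLike.ofReal_re]

lemma IsHermitian.star_mulVec_dotProduct_mulVec_mulVec {P : Matrix n n 𝕜} (hP : P.IsHermitian)
    (Q : Matrix n n 𝕜) (u v : n → 𝕜) :
    star (P *ᵥ u) ⬝ᵥ (Q *ᵥ (P *ᵥ v)) = star u ⬝ᵥ ((P * Q * P) *ᵥ v) := by
  rw [mulVec_mulVec, star_mulVec, dotProduct_mulVec, vecMul_vecMul, dotProduct_mulVec, hP.eq,
    mul_assoc]

lemma sum_mul_smul_add_smul_mul_conjTranspose {m ι : Type*} [Fintype ι] (K : ι → Matrix m n 𝕜)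
    (a b : ℝ) (X Y : Matrix n n 𝕜) :
    ∑ i, K i * (a • X + b • Y) * (K i)ᴴ =
      a • ∑ i, K i * X * (K i)ᴴ + b • ∑ i, K i * Y * (K i)ᴴ := by
  simp only [Matrix.mul_add, Matrix.add_mul, Matrix.mul_smul, Matrix.smul_mul,
    Finset.sum_add_distrib, Finset.smul_sum]

variable [DecidableEq n]

lemma IsHermitian.trace_cfc {A : Matrix n n 𝕜} (hA : A.IsHermitian) (f : ℝ → ℝ) :
    (cfc f A).trace = ∑ i, (f (hA.eigenvalues i) : 𝕜) := by
  rw [hA.cfc_eq, IsHermitian.cfc, Unitary.conjStarAlgAut_apply, trace_mul_cycle,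
    Unitary.coe_star_mul_self, one_mul, trace_diagonal]
  rfl

lemma PosSemidef.trace_sqrt {A : Matrix n n 𝕜} (hA : A.PosSemidef) :
    (CFC.sqrt A).trace = ∑ i, (√(hA.1.eigenvalues i) : 𝕜) := by
  rw [CFC.sqrt_eq_real_sqrt A hA.nonneg, cfcₙ_eq_cfc, hA.1.trace_cfc]

lemma PosSemidef.trace_sqrt_eq_of_charpoly_eq {A B : Matrix n n 𝕜} (hA : A.PosSemidef)
    (hB : B.PosSemidef) (h : A.charpoly = B.charpoly) :
    (CFC.sqrt A).trace = (CFC.sqrt B).trace := by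
  rw [hA.trace_sqrt, hB.trace_sqrt, (hA.1.eigenvalues_eq_eigenvalues_iff hB.1).mpr h]

lemma trace_sqrt_conjTranspose_mul_self (A : Matrix n n 𝕜) :
    (CFC.sqrt (Aᴴ * A)).trace = (CFC.sqrt (A * Aᴴ)).trace :=
  (posSemidef_conjTranspose_mul_self A).trace_sqrt_eq_of_charpoly_eq
    (posSemidef_self_mul_conjTranspose A) (charpoly_mul_comm _ _)

lemma trace_sqrt_star_mul_mul_of_mem_unitaryGroup {S U : Matrix n n 𝕜} (hS : S.PosSemidef)
    (hU : U ∈ unitaryGroup n 𝕜) :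
    (CFC.sqrt (star U * S * U)).trace = (CFC.sqrt S).trace := by
  refine (hS.star_mul_mul_same U).trace_sqrt_eq_of_charpoly_eq hS ?_
  rw [charpoly_mul_comm, ← mul_assoc, mem_unitaryGroup_iff.mp hU, one_mul]

lemma PosSemidef.sqrt_mul_mul_sqrt {Q : Matrix n n 𝕜} (hQ : Q.PosSemidef) (P : Matrix n n 𝕜) :
    (CFC.sqrt P * Q * CFC.sqrt P).PosSemidef :=
  ((CFC.sqrt_nonneg P).isSelfAdjoint.conjugate_nonneg hQ.nonneg).posSemidef

lemma PosSemidef.mul_mul_eq_sqrt_mul_mul_sqrt {P : Matrix n n 𝕜} (hP : P.PosSemidef)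
    (Q : Matrix n n 𝕜) :
    P * Q * P = CFC.sqrt P * (CFC.sqrt P * Q * CFC.sqrt P) * CFC.sqrt P := by
  conv_lhs => rw [← CFC.sqrt_mul_sqrt_self P hP.nonneg]
  simp only [mul_assoc]

lemma PosSemidef.re_sqrt_apply_self_le {T : Matrix n n 𝕜} (hT : T.PosSemidef) (i : n) :
    RCLike.re (CFC.sqrt T i i) ≤ √(RCLike.re (T i i)) := by
  have hR := (CFC.sqrt_nonneg T).posSemidef.1
  refine (le_abs_self _).trans (Real.abs_le_sqrt ?_)
  calc RCLike.re (CFC.sqrt T i i) ^ 2 ≤ ‖CFC.sqrt T i i‖ ^ 2 := by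
        rw [← sq_abs]; gcongr; exact RCLike.abs_re_le_norm _
    _ ≤ ∑ j, ‖CFC.sqrt T i j‖ ^ 2 :=
        Finset.single_le_sum (f := fun j => ‖CFC.sqrt T i j‖ ^ 2) (fun j _ => by positivity)
          (Finset.mem_univ i)
    _ = RCLike.re (T i i) := by rw [← hR.re_mul_self_apply_self, CFC.sqrt_mul_sqrt_self T hT.nonneg]

lemma PosSemidef.re_trace_sqrt_le {T : Matrix n n 𝕜} (hT : T.PosSemidef) :
    RCLike.re (CFC.sqrt T).trace ≤ ∑ i, √(RCLike.re (T i i)) := by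
  rw [trace, map_sum]
  exact Finset.sum_le_sum fun i _ => hT.re_sqrt_apply_self_le i

lemma PosSemidef.isDiag_of_re_trace_sqrt_eq {T : Matrix n n 𝕜} (hT : T.PosSemidef)
    (h : RCLike.re (CFC.sqrt T).trace = ∑ i, √(RCLike.re (T i i))) : T.IsDiag := by
  have hR := (CFC.sqrt_nonneg T).posSemidef.1
  rw [trace, map_sum] at h
  have hdiag : ∀ i, RCLike.re (CFC.sqrt T i i) = √(RCLike.re (T i i)) := fun i =>
    (Finset.sum_eq_sum_iff_of_le fun i _ => hT.re_sqrt_apply_self_le i).mp h i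
      (Finset.mem_univ i)
  have hrow : ∀ i j, i ≠ j → CFC.sqrt T i j = 0 := by
    intro i j hij
    have hsum : ∑ k, ‖CFC.sqrt T i k‖ ^ 2 ≤ ‖CFC.sqrt T i i‖ ^ 2 := by
      rw [← hR.re_mul_self_apply_self, CFC.sqrt_mul_sqrt_self T hT.nonneg,
        ← Real.sq_sqrt (RCLike.nonneg_iff.mp hT.diag_nonneg).1, ← hdiag, ← sq_abs]
      gcongr
      exact RCLike.abs_re_le_norm _
    have hpair := Finset.add_le_sum (f := fun k => ‖CFC.sqrt T i k‖ ^ 2)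
      (fun k _ => by positivity) (Finset.mem_univ i) (Finset.mem_univ j) hij
    have hzero : ‖CFC.sqrt T i j‖ ^ 2 ≤ 0 := by linarith
    simpa using hzero
  intro i j hij
  rw [← CFC.sqrt_mul_sqrt_self T hT.nonneg, mul_apply]
  refine Finset.sum_eq_zero fun k _ => ?_
  by_cases hk : k = i
  · rw [hk, hrow i j hij, mul_zero]
  · rw [hrow i k (Ne.symm hk), zero_mul]

lemma PosSemidef.re_trace_sqrt_combo_lt_of_eq_diagonal {T₀ T₁ : Matrix n n 𝕜}
    (h₀ : T₀.PosSemidef) (h₁ : T₁.PosSemidef) (hne : T₀ ≠ T₁) {a b : ℝ} (ha : 0 < a)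
    (hb : 0 < b) (hab : a + b = 1) {d : n → ℝ}
    (hd : a • T₀ + b • T₁ = diagonal (RCLike.ofReal ∘ d)) :
    a * RCLike.re (CFC.sqrt T₀).trace + b * RCLike.re (CFC.sqrt T₁).trace < ∑ i, √(d i) := by
  set x : n → ℝ := fun i => RCLike.re (T₀ i i)
  set y : n → ℝ := fun i => RCLike.re (T₁ i i)
  have hdxy : ∀ i, d i = a * x i + b * y i := fun i => by
    simpa [x, y, RCLike.smul_re] using congrArg RCLike.re (congrFun (congrFun hd i) i).symm
  have hx : ∀ i, x i ∈ Set.Ici 0 := fun i => (RCLike.nonneg_iff.mp h₀.diag_nonneg).1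
  have hy : ∀ i, y i ∈ Set.Ici 0 := fun i => (RCLike.nonneg_iff.mp h₁.diag_nonneg).1
  have hpt : ∀ i, a * √(x i) + b * √(y i) ≤ √(d i) := fun i => by
    simpa [hdxy] using Real.strictConcaveOn_sqrt.concaveOn.2 (hx i) (hy i) ha.le hb.le hab
  have hsplit : ∑ i, (a * √(x i) + b * √(y i)) = a * ∑ i, √(x i) + b * ∑ i, √(y i) := by
    rw [Finset.sum_add_distrib, Finset.mul_sum, Finset.mul_sum]
  have hle₀ := mul_le_mul_of_nonneg_left h₀.re_trace_sqrt_le ha.le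
  have hle₁ := mul_le_mul_of_nonneg_left h₁.re_trace_sqrt_le hb.le
  by_cases hdiag : T₀.IsDiag ∧ T₁.IsDiag
  · obtain ⟨i, hi⟩ : ∃ i, x i ≠ y i := by
      by_contra! hxy
      exact hne (h₀.1.eq_of_isDiag_of_re_diag_eq h₁.1 hdiag.1 hdiag.2 hxy)
    have hlt : a * √(x i) + b * √(y i) < √(d i) := by
      simpa [hdxy] using Real.strictConcaveOn_sqrt.2 (hx i) (hy i) hi ha hb hab
    have := Finset.sum_lt_sum (fun i _ => hpt i) ⟨i, Finset.mem_univ i, hlt⟩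
    linarith
  · have hsum := Finset.sum_le_sum fun i (_ : i ∈ Finset.univ) => hpt i
    rcases not_and_or.mp hdiag with hnd | hnd
    · have := mul_lt_mul_of_pos_left
        (h₀.re_trace_sqrt_le.lt_of_ne (mt h₀.isDiag_of_re_trace_sqrt_eq hnd)) ha
      linarith
    · have := mul_lt_mul_of_pos_left
        (h₁.re_trace_sqrt_le.lt_of_ne (mt h₁.isDiag_of_re_trace_sqrt_eq hnd)) hb
      linarith

theorem strictConcaveOn_re_trace_sqrt :
    StrictConcaveOn ℝ {S : Matrix n n 𝕜 | S.PosSemidef}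
      fun S => RCLike.re (CFC.sqrt S).trace := by
  refine ⟨fun S₀ h₀ S₁ h₁ a b ha hb _ => (h₀.smul ha).add (h₁.smul hb),
    fun S₀ h₀ S₁ h₁ hne a b ha hb hab => ?_⟩
  have hS : (a • S₀ + b • S₁).PosSemidef := (h₀.smul ha.le).add (h₁.smul hb.le)
  set U := hS.1.eigenvectorUnitary
  set V : Matrix n n 𝕜 := (U : Matrix n n 𝕜)
  set φ := Unitary.conjStarAlgAut ℝ (Matrix n n 𝕜) (star U)
  have hφ : ∀ S, φ S = star V * S * V := Unitary.conjStarAlgAut_star_apply _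
  have hdiag : a • (star V * S₀ * V) + b • (star V * S₁ * V) =
      diagonal (RCLike.ofReal ∘ hS.1.eigenvalues) := by
    rw [← hφ, ← hφ, ← map_smul, ← map_smul, ← map_add, hφ,
      ← hS.1.conjStarAlgAut_star_eigenvectorUnitary, Unitary.conjStarAlgAut_star_apply]
  have hne' : star V * S₀ * V ≠ star V * S₁ * V := by
    simpa only [hφ] using (EquivLike.injective φ).ne hne
  have := (h₀.star_mul_mul_same V).re_trace_sqrt_combo_lt_of_eq_diagonal
    (h₁.star_mul_mul_same V) hne' ha hb hab hdiag
  rw [trace_sqrt_star_mul_mul_of_mem_unitaryGroup h₀ U.2,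
    trace_sqrt_star_mul_mul_of_mem_unitaryGroup h₁ U.2] at this
  simpa [hS.trace_sqrt] using this

end Matrix

section

variable {n : Type*} [Fintype n] [DecidableEq n]

lemma msqrt_eq_sqrt {A : Matrix n n ℂ} (hA : A.PosSemidef) : msqrt A = CFC.sqrt A := by
  rw [msqrt, dif_pos hA, CFC.sqrt_eq_real_sqrt A hA.nonneg, cfcₙ_eq_cfc, hA.1.cfc_eq,
    IsHermitian.cfc, Unitary.conjStarAlgAut_apply]
  rfl

lemma fidelity_eq_re_trace_sqrt {P Q : Matrix n n ℂ} (hP : P.PosSemidef) (hQ : Q.PosSemidef) :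
    fidelity P Q = (CFC.sqrt (CFC.sqrt P * Q * CFC.sqrt P)).trace.re := by
  have hsP : (CFC.sqrt P)ᴴ = CFC.sqrt P := (CFC.sqrt_nonneg P).isSelfAdjoint
  have hsQ : (CFC.sqrt Q)ᴴ = CFC.sqrt Q := (CFC.sqrt_nonneg Q).isSelfAdjoint
  set A := CFC.sqrt P * CFC.sqrt Q
  have hAA : Aᴴ * A = CFC.sqrt Q * P * CFC.sqrt Q := by
    simp only [A, conjTranspose_mul, hsP, hsQ, mul_assoc]
    rw [← mul_assoc (CFC.sqrt P), CFC.sqrt_mul_sqrt_self P hP.nonneg]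
  have hAA' : A * Aᴴ = CFC.sqrt P * Q * CFC.sqrt P := by
    simp only [A, conjTranspose_mul, hsP, hsQ, mul_assoc]
    rw [← mul_assoc (CFC.sqrt Q), CFC.sqrt_mul_sqrt_self Q hQ.nonneg]
  rw [fidelity, msqrt_eq_sqrt hQ, ← hAA, msqrt_eq_sqrt (posSemidef_conjTranspose_mul_self A),
    trace_sqrt_conjTranspose_mul_self, hAA']

lemma mul_fidelity_add_mul_fidelity_lt {P Q₀ Q₁ : Matrix n n ℂ} (hP : P.PosSemidef)
    (hQ₀ : Q₀.PosSemidef) (hQ₁ : Q₁.PosSemidef)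
    (hne : CFC.sqrt P * Q₀ * CFC.sqrt P ≠ CFC.sqrt P * Q₁ * CFC.sqrt P) {a b : ℝ} (ha : 0 < a)
    (hb : 0 < b) (hab : a + b = 1) :
    a * fidelity P Q₀ + b * fidelity P Q₁ < fidelity P (a • Q₀ + b • Q₁) := by
  have hlt := strictConcaveOn_re_trace_sqrt.2 (hQ₀.sqrt_mul_mul_sqrt P) (hQ₁.sqrt_mul_mul_sqrt P)
    hne ha hb hab
  have hcombo : a • (CFC.sqrt P * Q₀ * CFC.sqrt P) + b • (CFC.sqrt P * Q₁ * CFC.sqrt P) =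
      CFC.sqrt P * (a • Q₀ + b • Q₁) * CFC.sqrt P := by
    simp only [mul_add, add_mul, Matrix.mul_smul, Matrix.smul_mul]
  simpa only [hcombo, smul_eq_mul, RCLike.re_to_complex, ← fidelity_eq_re_trace_sqrt hP hQ₀,
    ← fidelity_eq_re_trace_sqrt hP hQ₁,
    ← fidelity_eq_re_trace_sqrt hP ((hQ₀.smul ha.le).add (hQ₁.smul hb.le))] using hlt

end

theorem projection_restricted_uniqueness_general
    {H K : Type*} [Fintype H] [DecidableEq H]
    {m : ℕ} (Kr : Fin m → Matrix K H ℂ)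
    (Λ : Matrix H H ℂ → Matrix K K ℂ)
    (hΛ : ∀ X, Λ X = ∑ a, Kr a * X * (Kr a)ᴴ)
    (P : Matrix H H ℂ) (hP : P.PosSemidef)
    (C : Matrix K K ℂ)
    (Q₀ : Matrix H H ℂ) (hQ₀ : Q₀.PosSemidef) (hQ₀f : Λ Q₀ = C)
    (hQ₀max : ∀ Q : Matrix H H ℂ, Q.PosSemidef → Λ Q = C →
      fidelity P Q ≤ fidelity P Q₀)
    (Q₁ : Matrix H H ℂ) (hQ₁ : Q₁.PosSemidef) (hQ₁f : Λ Q₁ = C)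
    (hQ₁max : ∀ Q : Matrix H H ℂ, Q.PosSemidef → Λ Q = C →
      fidelity P Q ≤ fidelity P Q₁) :
    (∀ u v : H → ℂ,
      star (P *ᵥ u) ⬝ᵥ (Q₀ *ᵥ (P *ᵥ v)) = star (P *ᵥ u) ⬝ᵥ (Q₁ *ᵥ (P *ᵥ v))) ∧
    (P.PosDef → Q₀ = Q₁) := by
  have hsandwich : CFC.sqrt P * Q₀ * CFC.sqrt P = CFC.sqrt P * Q₁ * CFC.sqrt P := by
    by_contra hne
    have hQ : ((2⁻¹ : ℝ) • Q₀ + (2⁻¹ : ℝ) • Q₁).PosSemidef :=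
      (hQ₀.smul (by norm_num)).add (hQ₁.smul (by norm_num))
    have hQf : Λ ((2⁻¹ : ℝ) • Q₀ + (2⁻¹ : ℝ) • Q₁) = C := by
      rw [hΛ, sum_mul_smul_add_smul_mul_conjTranspose, ← hΛ, ← hΛ, hQ₀f, hQ₁f,
        Convex.combo_self (by norm_num)]
    have hlt := mul_fidelity_add_mul_fidelity_lt hP hQ₀ hQ₁ hne (a := 2⁻¹) (b := 2⁻¹)
      (by norm_num) (by norm_num) (by norm_num)
    linarith [hQ₀max _ hQ hQf, hQ₁max Q₀ hQ₀ hQ₀f]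
  have hPQP : P * Q₀ * P = P * Q₁ * P := by
    rw [hP.mul_mul_eq_sqrt_mul_mul_sqrt, hP.mul_mul_eq_sqrt_mul_mul_sqrt, hsandwich]
  refine ⟨fun u v => ?_, fun hPD => hPD.isUnit.mul_left_cancel (hPD.isUnit.mul_right_cancel hPQP)⟩
  rw [hP.1.star_mulVec_dotProduct_mulVec_mulVec, hP.1.star_mulVec_dotProduct_mulVec_mulVec, hPQP]

/-- Let `Λ` be a quantum channel, `C` positive definite, `P` PSD, and
let `Q₀, Q₁` both maximize `Q ↦ F(P,Q)` over `{Q PSD : Λ Q = C}`. Then the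
compressions of `Q₀` and `Q₁` to the support (range) of `P` agree, and if `P` is
positive definite the maximizer is unique. -/
theorem projection_restricted_uniqueness
    {H K : Type*} [Fintype H] [DecidableEq H] [Fintype K] [DecidableEq K]
    {m : ℕ} (Kr : Fin m → Matrix K H ℂ)
    (hTP : ∑ a, (Kr a)ᴴ * Kr a = (1 : Matrix H H ℂ))
    (Λ : Matrix H H ℂ → Matrix K K ℂ)
    (hΛ : ∀ X, Λ X = ∑ a, Kr a * X * (Kr a)ᴴ)
    (P : Matrix H H ℂ) (hP : P.PosSemidef)
    (C : Matrix K K ℂ) (hC : C.PosDef)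
    (Q₀ : Matrix H H ℂ) (hQ₀ : Q₀.PosSemidef) (hQ₀f : Λ Q₀ = C)
    (hQ₀max : ∀ Q : Matrix H H ℂ, Q.PosSemidef → Λ Q = C →
      fidelity P Q ≤ fidelity P Q₀)
    (Q₁ : Matrix H H ℂ) (hQ₁ : Q₁.PosSemidef) (hQ₁f : Λ Q₁ = C)
    (hQ₁max : ∀ Q : Matrix H H ℂ, Q.PosSemidef → Λ Q = C →
      fidelity P Q ≤ fidelity P Q₁) :
    (∀ u v : H → ℂ,
      star (P *ᵥ u) ⬝ᵥ (Q₀ *ᵥ (P *ᵥ v)) = star (P *ᵥ u) ⬝ᵥ (Q₁ *ᵥ (P *ᵥ v))) ∧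
    (P.PosDef → Q₀ = Q₁) :=
  projection_restricted_uniqueness_general Kr Λ hΛ P hP C Q₀ hQ₀ hQ₀f hQ₀max Q₁ hQ₁ hQ₁f hQ₁max
end
end
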